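/- Let b_r, b_{r+1}, b_{r+2}, b_{r+3} be distinct nonzero complex numbers. If L_r is Δ_r-normal of type (T1) (parameters x_r, y_r ∈ ℂ∖{0}) and L_{r+1} is Δ_{r+1}-normal of type (T2) (parameters x_{r+1}, y_{r+1}, q_{r+1} ∈ ℂ∖{0}, q'_{r+1} ∈ ℂ), then P_{1,1}(L_r) ≠ P_{3,3}(L_{r+1}). -/

import Mathlib

/-- `b_Δ(1) = 1/b₃ - 1/b₂`. -/
noncomputable def bD1 (b₁ b₂ b₃ : ℂ) : ℂ := 1 / b₃ - 1 / b₂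
/-- `b_Δ(2) = 1/b₃ - 1/b₁`. -/
noncomputable def bD2 (b₁ b₂ b₃ : ℂ) : ℂ := 1 / b₃ - 1 / b₁
/-- `b_Δ(3) = 1/b₂ - 1/b₁`. -/
noncomputable def bD3 (b₁ b₂ b₃ : ℂ) : ℂ := 1 / b₂ - 1 / b₁

/-- The five canonical generators of a type (T1) `Δ`-normal subspace,
`Δ = diag(b₁,b₂,b₃)`, with parameters `x, y`. -/
noncomputable def t1Basis (b₁ b₂ b₃ x y : ℂ) : Fin 5 → Matrix (Fin 3) (Fin 3) ℂ :=
  ![!![1, 0, 0; x, 0, 0; y, 0, 0],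
    !![1, 1, 0; bD3 b₁ b₂ b₃ * x, x, 0; bD2 b₁ b₂ b₃ * y, y, 0],
    !![0, 0, 1; 0, 0, 0; 0, 0, 0],
    !![0, 0, 0; bD3 b₁ b₂ b₃ / b₂, bD3 b₁ b₂ b₃, 1; 0, 0, 0],
    !![0, 0, 0; 0, 0, 0; bD2 b₁ b₂ b₃ / b₃, bD2 b₁ b₂ b₃, 1]]

/-- The type (T1) `Δ`-normal subspace with parameters `x, y`. -/
noncomputable def t1Normal (b₁ b₂ b₃ x y : ℂ) : Submodule ℂ (Matrix (Fin 3) (Fin 3) ℂ) :=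
  Submodule.span ℂ (Set.range (t1Basis b₁ b₂ b₃ x y))

/-- The five canonical generators of a type (T2) `Δ`-normal subspace,
`Δ = diag(b₁,b₂,b₃)`, with parameters `x, y, q, q'`. -/
noncomputable def t2Basis (b₁ b₂ b₃ x y q q' : ℂ) : Fin 5 → Matrix (Fin 3) (Fin 3) ℂ :=
  ![!![1, 0, 0; x, 0, 0; y, 0, 0],
    !![1, 1, 0; bD3 b₁ b₂ b₃ * x, x, 0; bD2 b₁ b₂ b₃ * y, y, 0],
    !![0, 0, 1; q', q, 0; q' * y / x + bD1 b₁ b₂ b₃ * q * y / x, q * y / x, 0],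
    !![0, 0, 0; bD3 b₁ b₂ b₃ / b₂ - q' / x, bD3 b₁ b₂ b₃ - q / x, 1; 0, 0, 0],
    !![0, 0, 0; 0, 0, 0;
       bD2 b₁ b₂ b₃ / b₃ - bD1 b₁ b₂ b₃ * q / x - q' / x, bD2 b₁ b₂ b₃ - q / x, 1]]

/-- The type (T2) `Δ`-normal subspace with parameters `x, y, q, q'`. -/
noncomputable def t2Normal (b₁ b₂ b₃ x y q q' : ℂ) :
    Submodule ℂ (Matrix (Fin 3) (Fin 3) ℂ) :=
  Submodule.span ℂ (Set.range (t2Basis b₁ b₂ b₃ x y q q'))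

/-- The five canonical generators of a strongly `Δ`-normal subspace,
`Δ = diag(b₁,b₂,b₃)`, with parameters `x, y, q`. -/
noncomputable def strongBasis (b₁ b₂ b₃ x y q : ℂ) : Fin 5 → Matrix (Fin 3) (Fin 3) ℂ :=
  ![!![1, 0, 0; x, 0, 0; y, 0, 0],
    !![0, 1, 0; bD3 b₁ b₂ b₃ * x, x, 0; bD2 b₁ b₂ b₃ * y, y, 0],
    !![0, 0, 1; q / b₂, q, 0; -y / (b₁ * b₃), -y / b₁, 0],
    !![0, 0, 0; 1 / b₂ ^ 2, 1 / b₂, 1; 0, 0, 0],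
    !![0, 0, 0; 0, 0, 0; 1 / b₃ ^ 2, 1 / b₃, 1]]

/-- The strongly `Δ`-normal subspace with parameters `x, y, q`. -/
noncomputable def strongNormal (b₁ b₂ b₃ x y q : ℂ) :
    Submodule ℂ (Matrix (Fin 3) (Fin 3) ℂ) :=
  Submodule.span ℂ (Set.range (strongBasis b₁ b₂ b₃ x y q))

/-- Deleting row `k` and column `l`, as a linear map `M₃(ℂ) → M₂(ℂ)`. -/
def delL (k l : Fin 3) : Matrix (Fin 3) (Fin 3) ℂ →ₗ[ℂ] Matrix (Fin 2) (Fin 2) ℂ where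
  toFun X := X.submatrix k.succAbove l.succAbove
  map_add' _ _ := rfl
  map_smul' _ _ := rfl

/-- The 3×3 lower Jordan cell. -/
def J3 : Matrix (Fin 3) (Fin 3) ℂ := !![0, 0, 0; 1, 0, 0; 0, 1, 0]


/-!
`P_{1,1}(L_r)` is spanned by `[[x, 0], [y, 0]]`, `[[b_Δ(3), 1], [0, 0]]` and `[[0, 0], [b_Δ(2), 1]]`,
so it lies in the kernel of the functional
`φ(M) = y (M₁₁ - b_Δ(3) M₁₂) - x (M₂₁ - b_Δ(2) M₂₂)` (with `Δ = Δ_r`, `x = x_r`, `y = y_r`).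
On `P_{3,3}` of the first two generators of the type (T2) subspace `L_{r+1}`, `φ` takes the values
`y - x x'` and, by `b_{Δ_r}(3) + b_{Δ_{r+1}}(3) = b_{Δ_r}(2)`, `y - (y - x x') b_{Δ_r}(3)`.
If the two projections agreed, both values would vanish, forcing `y = 0`.
-/

theorem bD3_add_bD3_eq_bD2 (b₁ b₂ b₃ b₄ : ℂ) :
    bD3 b₁ b₂ b₃ + bD3 b₂ b₃ b₄ = bD2 b₁ b₂ b₃ := by
  simp only [bD2, bD3]
  ring

noncomputable def t1Annihilator (b₁ b₂ b₃ x y : ℂ) : Matrix (Fin 2) (Fin 2) ℂ →ₗ[ℂ] ℂ where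
  toFun M := y * (M 0 0 - bD3 b₁ b₂ b₃ * M 0 1) - x * (M 1 0 - bD2 b₁ b₂ b₃ * M 1 1)
  map_add' M N := by simp only [Matrix.add_apply]; ring
  map_smul' c M := by simp only [Matrix.smul_apply, smul_eq_mul, RingHom.id_apply]; ring

section

variable (b₁ b₂ b₃ b₄ x y x' y' q q' : ℂ)

theorem t1Annihilator_apply (M : Matrix (Fin 2) (Fin 2) ℂ) :
    t1Annihilator b₁ b₂ b₃ x y M =
      y * (M 0 0 - bD3 b₁ b₂ b₃ * M 0 1) - x * (M 1 0 - bD2 b₁ b₂ b₃ * M 1 1) :=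
  rfl

theorem delL_apply (k l : Fin 3) (X : Matrix (Fin 3) (Fin 3) ℂ) :
    delL k l X = X.submatrix k.succAbove l.succAbove :=
  rfl

theorem map_delL_t1Normal_le_ker_t1Annihilator :
    Submodule.map (delL 0 0) (t1Normal b₁ b₂ b₃ x y) ≤
      LinearMap.ker (t1Annihilator b₁ b₂ b₃ x y) := by
  rw [Submodule.map_le_iff_le_comap, t1Normal, Submodule.span_le]
  rintro _ ⟨i, rfl⟩
  fin_cases i <;>
    simp [t1Annihilator_apply, delL_apply, t1Basis, mul_comm]

theorem t1Annihilator_delL_t2Basis_zero :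
    t1Annihilator b₁ b₂ b₃ x y (delL 2 2 (t2Basis b₂ b₃ b₄ x' y' q q' 0)) = y - x * x' := by
  simp [t1Annihilator_apply, delL_apply, t2Basis, Fin.succAbove, Fin.lt_def]

theorem t1Annihilator_delL_t2Basis_one :
    t1Annihilator b₁ b₂ b₃ x y (delL 2 2 (t2Basis b₂ b₃ b₄ x' y' q q' 1)) =
      y - (y - x * x') * bD3 b₁ b₂ b₃ := by
  simp [t1Annihilator_apply, delL_apply, t2Basis, Fin.succAbove, Fin.lt_def,
    ← bD3_add_bD3_eq_bD2 b₁ b₂ b₃ b₄]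
  ring

theorem map_delL_t1Normal_ne_map_delL_t2Normal (hy : y ≠ 0) :
    Submodule.map (delL 0 0) (t1Normal b₁ b₂ b₃ x y) ≠
      Submodule.map (delL 2 2) (t2Normal b₂ b₃ b₄ x' y' q q') := by
  intro h
  have hker (i : Fin 5) :
      t1Annihilator b₁ b₂ b₃ x y (delL 2 2 (t2Basis b₂ b₃ b₄ x' y' q q' i)) = 0 :=
    map_delL_t1Normal_le_ker_t1Annihilator b₁ b₂ b₃ x y <| h ▸
      Submodule.mem_map_of_mem (Submodule.subset_span ⟨i, rfl⟩)
  have h₀ := hker 0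
  have h₁ := hker 1
  rw [t1Annihilator_delL_t2Basis_zero] at h₀
  rw [t1Annihilator_delL_t2Basis_one, h₀, zero_mul, sub_zero] at h₁
  exact hy h₁

end

theorem t1_t2_no_match_general (b : ℕ → ℂ) (r : ℕ)
    (xr yr xr' yr' qr' : ℂ) (qr'' : ℂ)
    (hyr : yr ≠ 0) :
    Submodule.map (delL 0 0) (t1Normal (b r) (b (r + 1)) (b (r + 2)) xr yr)
      ≠ Submodule.map (delL 2 2)
          (t2Normal (b (r + 1)) (b (r + 2)) (b (r + 3)) xr' yr' qr' qr'') :=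
  map_delL_t1Normal_ne_map_delL_t2Normal _ _ _ _ _ _ _ _ _ _ hyr

/-- A type (T1) cross-section cannot be followed by a type (T2) one:
`P_{1,1}(L_r) ≠ P_{3,3}(L_{r+1})`. -/
theorem t1_t2_no_match (b : ℕ → ℂ) (r : ℕ)
    (hb : ∀ k, k ∈ Finset.Icc r (r + 3) → b k ≠ 0)
    (hbd : ∀ k l, k ∈ Finset.Icc r (r + 3) → l ∈ Finset.Icc r (r + 3) → k ≠ l → b k ≠ b l)
    (xr yr xr' yr' qr' : ℂ) (qr'' : ℂ)
    (hxr : xr ≠ 0) (hyr : yr ≠ 0) (hxr' : xr' ≠ 0) (hyr' : yr' ≠ 0) (hqr' : qr' ≠ 0) :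
    Submodule.map (delL 0 0) (t1Normal (b r) (b (r + 1)) (b (r + 2)) xr yr)
      ≠ Submodule.map (delL 2 2)
          (t2Normal (b (r + 1)) (b (r + 2)) (b (r + 3)) xr' yr' qr' qr'') :=
  t1_t2_no_match_general b r xr yr xr' yr' qr' qr'' hyr
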